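/- For every odd positive integer n, no nonzero real number is a root of the domination polynomial D(F_n,x) of the friendship graph F_n. -/
import Mathlib


open Polynomial

/-- `S` is a dominating set of the graph `G`: every vertex not in `S` has a neighbor in `S`. -/
def SimpleGraph.IsDomSet {V : Type*} (G : SimpleGraph V) (S : Finset V) : Prop :=
  ∀ v : V, v ∈ S ∨ ∃ u ∈ S, G.Adj u v

open Classical in
/-- The domination polynomial of a finite graph `G`:
`D(G,x) = ∑ d(G,i) xⁱ` where `d(G,i)` is the number of dominating sets of size `i`. -/
noncomputable def domPoly {V : Type*} [Fintype V] (G : SimpleGraph V) : Polynomial ℂ :=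
  ∑ S ∈ Finset.univ.filter (fun S : Finset V => G.IsDomSet S), X ^ S.card

/-- The friendship graph `F_n`: the join of `K₁` (the vertex `none`) with `n`
disjoint copies of `K₂`, i.e. `n` triangles sharing exactly one common vertex. -/
def friendshipGraph (n : ℕ) : SimpleGraph (Option (Fin n × Fin 2)) :=
  SimpleGraph.fromRel (fun a b =>
    (a = none ∧ b ≠ none) ∨ (∃ i, a = some (i, 0) ∧ b = some (i, 1)))

/- ---------- auxiliary lemmas ---------- -/

lemma powerset_sum {α : Type*} [DecidableEq α] (s : Finset α) :
    ∑ T ∈ s.powerset, (X : ℂ[X]) ^ T.card = (1 + X) ^ s.card := by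
  induction s using Finset.induction_on with
  | empty => simp
  | @insert a s ha ih =>
    rw [Finset.sum_powerset_insert ha]
    have h2 : ∑ t ∈ s.powerset, (X : ℂ[X]) ^ (insert a t).card
        = ∑ t ∈ s.powerset, X * X ^ t.card := by
      refine Finset.sum_congr rfl fun t ht => ?_
      rw [Finset.card_insert_of_notMem (fun h => ha (Finset.mem_powerset.mp ht h)),
        pow_succ, mul_comm]
    rw [h2, ← Finset.mul_sum, ih, Finset.card_insert_of_notMem ha, pow_succ]
    ring

lemma domset_iff (n : ℕ) (hpos : 0 < n) (S : Finset (Option (Fin n × Fin 2))) :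
    (friendshipGraph n).IsDomSet S ↔
      (none ∈ S ∨ ∀ i : Fin n, some (i, 0) ∈ S ∨ some (i, 1) ∈ S) := by
  constructor
  · intro h
    by_cases hn : none ∈ S
    · exact Or.inl hn
    · refine Or.inr fun i => ?_
      rcases h (some (i, 0)) with h0 | ⟨u, hu, hadj⟩
      · exact Or.inl h0
      · simp only [friendshipGraph, SimpleGraph.fromRel_adj] at hadj
        rcases hadj.2 with (⟨h1, _⟩ | ⟨j, h1, h2⟩) | (⟨h1, _⟩ | ⟨j, h1, h2⟩)
        · exact absurd (h1 ▸ hu) hn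
        · simp at h2
        · simp at h1
        · have hij : i = j := by simpa using h1
          subst hij
          exact Or.inr (h2 ▸ hu)
  · rintro (hn | h) v
    · cases v with
      | none => exact Or.inl hn
      | some p =>
        exact Or.inr ⟨none, hn, by simp [friendshipGraph, SimpleGraph.fromRel_adj]⟩
    · cases v with
      | none =>
        right
        rcases h ⟨0, hpos⟩ with h0 | h1
        · exact ⟨_, h0, by simp [friendshipGraph, SimpleGraph.fromRel_adj]⟩
        · exact ⟨_, h1, by simp [friendshipGraph, SimpleGraph.fromRel_adj]⟩
      | some p =>
        obtain ⟨i, j⟩ := p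
        fin_cases j
        · rcases h i with h0 | h1
          · exact Or.inl h0
          · refine Or.inr ⟨some (i, 1), h1, ?_⟩
            simp [friendshipGraph, SimpleGraph.fromRel_adj]
        · rcases h i with h0 | h1
          · refine Or.inr ⟨some (i, 0), h0, ?_⟩
            simp [friendshipGraph, SimpleGraph.fromRel_adj]
          · exact Or.inl h1

open Classical in
lemma domPoly_friendship (n : ℕ) (hpos : 0 < n) :
    domPoly (friendshipGraph n) = X * (1 + X) ^ (2 * n) + ((1 + X) ^ 2 - 1) ^ n := by
  classical
  set V := Option (Fin n × Fin 2) with hV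
  have hfilt : (Finset.univ.filter (fun S : Finset V => (friendshipGraph n).IsDomSet S))
      = Finset.univ.filter
          (fun S : Finset V => none ∈ S ∨ ∀ i : Fin n, some (i, 0) ∈ S ∨ some (i, 1) ∈ S) :=
    Finset.filter_congr fun S _ => domset_iff n hpos S
  rw [domPoly, hfilt]
  -- split by whether `none ∈ S`
  rw [← Finset.sum_filter_add_sum_filter_not _ (fun S : Finset V => none ∈ S)
    (fun S => (X : ℂ[X]) ^ S.card)]
  rw [Finset.filter_filter, Finset.filter_filter]
  have e1 : (Finset.univ.filter (fun S : Finset V =>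
      (none ∈ S ∨ ∀ i : Fin n, some (i, 0) ∈ S ∨ some (i, 1) ∈ S) ∧ none ∈ S))
      = Finset.univ.filter (fun S : Finset V => none ∈ S) :=
    Finset.filter_congr fun S _ => by tauto
  have e2 : (Finset.univ.filter (fun S : Finset V =>
      (none ∈ S ∨ ∀ i : Fin n, some (i, 0) ∈ S ∨ some (i, 1) ∈ S) ∧ ¬ none ∈ S))
      = Finset.univ.filter (fun S : Finset V =>
          ¬ none ∈ S ∧ ∀ i : Fin n, some (i, 0) ∈ S ∨ some (i, 1) ∈ S) :=
    Finset.filter_congr fun S _ => by tauto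
  rw [e1, e2]
  congr 1
  · -- sets containing `none`
    have hsplit := Finset.sum_filter_add_sum_filter_not (Finset.univ : Finset (Finset V))
      (fun S => none ∈ S) (fun S => (X : ℂ[X]) ^ S.card)
    have htot : ∑ S ∈ (Finset.univ : Finset (Finset V)), (X : ℂ[X]) ^ S.card
        = (1 + X) ^ (2 * n + 1) := by
      rw [← Finset.powerset_univ, powerset_sum, Finset.card_univ]
      congr 1
      simp only [hV, Fintype.card_option, Fintype.card_prod, Fintype.card_fin]
      omega
    have hnot : (Finset.univ.filter (fun S : Finset V => ¬ none ∈ S))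
        = ((Finset.univ : Finset V).erase none).powerset := by
      ext S
      simp [Finset.subset_erase]
    have hnotsum : ∑ S ∈ Finset.univ.filter (fun S : Finset V => ¬ none ∈ S),
        (X : ℂ[X]) ^ S.card = (1 + X) ^ (2 * n) := by
      rw [hnot, powerset_sum, Finset.card_erase_of_mem (Finset.mem_univ _), Finset.card_univ]
      congr 1
      simp only [hV, Fintype.card_option, Fintype.card_prod, Fintype.card_fin]
      omega
    have : ∑ S ∈ Finset.univ.filter (fun S : Finset V => none ∈ S), (X : ℂ[X]) ^ S.card
        = (1 + X) ^ (2 * n + 1) - (1 + X) ^ (2 * n) := by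
      rw [← htot, ← hsplit, hnotsum]; ring
    rw [this, pow_succ]; ring
  · -- sets avoiding `none` that meet every pair
    have hT : ∑ T ∈ Finset.univ.filter (fun T : Finset (Fin 2) => T.Nonempty),
        (X : ℂ[X]) ^ T.card = (1 + X) ^ 2 - 1 := by
      have hsplit := Finset.sum_filter_add_sum_filter_not (Finset.univ : Finset (Finset (Fin 2)))
        (fun T => T.Nonempty) (fun T => (X : ℂ[X]) ^ T.card)
      have htot : ∑ T ∈ (Finset.univ : Finset (Finset (Fin 2))), (X : ℂ[X]) ^ T.card
          = (1 + X) ^ 2 := by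
        rw [← Finset.powerset_univ, powerset_sum, Finset.card_univ, Fintype.card_fin]
      have hne : (Finset.univ.filter (fun T : Finset (Fin 2) => ¬ T.Nonempty))
          = {(∅ : Finset (Fin 2))} := by
        ext T
        simp [Finset.not_nonempty_iff_eq_empty]
      have h0 : ∑ T ∈ Finset.univ.filter (fun T : Finset (Fin 2) => ¬ T.Nonempty),
          (X : ℂ[X]) ^ T.card = 1 := by
        rw [hne]; simp
      rw [h0] at hsplit
      rw [← htot, ← hsplit]; ring
    rw [← hT]
    have hrhs := Finset.prod_univ_sum
      (fun _ : Fin n => Finset.univ.filter (fun T : Finset (Fin 2) => T.Nonempty))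
      (fun _ T => (X : ℂ[X]) ^ T.card)
    rw [Finset.prod_const, Finset.card_univ, Fintype.card_fin] at hrhs
    rw [hrhs]
    refine Finset.sum_nbij'
      (fun S => fun i => Finset.univ.filter (fun j : Fin 2 => some (i, j) ∈ S))
      (fun g => Finset.univ.filter
        (fun v : V => ∃ p : Fin n × Fin 2, v = some p ∧ p.2 ∈ g p.1))
      ?_ ?_ ?_ ?_ ?_
    · intro S hS
      simp only [Finset.mem_filter, Finset.mem_univ, true_and] at hS
      rw [Fintype.mem_piFinset]
      intro i
      simp only [Finset.mem_filter, Finset.mem_univ, true_and]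
      rcases hS.2 i with h0 | h1
      · exact ⟨0, by simp [h0]⟩
      · exact ⟨1, by simp [h1]⟩
    · intro g hg
      rw [Fintype.mem_piFinset] at hg
      simp only [Finset.mem_filter, Finset.mem_univ, true_and]
      constructor
      · simp
      · intro i
        have := hg i
        simp only [Finset.mem_filter, Finset.mem_univ, true_and] at this
        obtain ⟨j, hj⟩ := this
        have hj01 : j = 0 ∨ j = 1 := by fin_cases j <;> simp
        rcases hj01 with rfl | rfl
        · exact Or.inl ⟨(i, 0), rfl, hj⟩
        · exact Or.inr ⟨(i, 1), rfl, hj⟩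
    · intro S hS
      simp only [Finset.mem_filter, Finset.mem_univ, true_and] at hS
      ext v
      cases v with
      | none => simp [hS.1]
      | some p =>
        obtain ⟨a, b⟩ := p
        simp only [Finset.mem_filter, Finset.mem_univ, true_and]
        constructor
        · rintro ⟨⟨a', b'⟩, hab, hm⟩
          simp only [Finset.mem_filter, Finset.mem_univ, true_and] at hm
          obtain ⟨rfl, rfl⟩ : a = a' ∧ b = b' := by
            have := Option.some_inj.mp hab
            exact ⟨congrArg Prod.fst this, congrArg Prod.snd this⟩
          exact hm
        · intro hm
          refine ⟨(a, b), rfl, ?_⟩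
          simp only [Finset.mem_filter, Finset.mem_univ, true_and]
          exact hm
    · intro g hg
      funext i
      ext j
      simp only [Finset.mem_filter, Finset.mem_univ, true_and]
      constructor
      · rintro ⟨⟨a', b'⟩, hab, hm⟩
        obtain ⟨rfl, rfl⟩ : i = a' ∧ j = b' := by
          have := Option.some_inj.mp hab
          exact ⟨congrArg Prod.fst this, congrArg Prod.snd this⟩
        exact hm
      · intro hm
        exact ⟨(i, j), rfl, hm⟩
    · intro S hS
      simp only [Finset.mem_filter, Finset.mem_univ, true_and] at hS
      rw [Finset.prod_pow_eq_pow_sum]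
      congr 1
      have hcard : S.card = ∑ v : V, if v ∈ S then 1 else 0 := by
        rw [← Finset.filter_univ_mem S, Finset.card_filter]
        simp
      rw [hcard, Fintype.sum_option, if_neg hS.1, zero_add, Fintype.sum_prod_type]
      refine Finset.sum_congr rfl fun i _ => ?_
      rw [Finset.card_filter]

lemma key_real_ne (n : ℕ) (hpos : 0 < n) (hodd : Odd n) (r : ℝ) (hr : r ≠ 0) :
    r * (1 + r) ^ (2 * n) + ((1 + r) ^ 2 - 1) ^ n ≠ 0 := by
  have hsq : (1 + r) ^ 2 - 1 = r * (r + 2) := by ring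
  rw [hsq, pow_mul]
  rcases lt_trichotomy r 0 with hneg | h0 | hposr
  · rcases lt_trichotomy r (-2) with h2 | h2 | h2
    · -- r < -2
      have ha : 0 < (1 + r) ^ 2 := by nlinarith
      have hb : 0 < r * (r + 2) := by nlinarith
      have hlt : (r * (r + 2)) ^ n < ((1 + r) ^ 2) ^ n :=
        pow_lt_pow_left₀ (by nlinarith) hb.le hpos.ne'
      have han : 0 < ((1 + r) ^ 2) ^ n := pow_pos ha n
      have hmul : r * ((1 + r) ^ 2) ^ n ≤ -2 * ((1 + r) ^ 2) ^ n :=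
        mul_le_mul_of_nonneg_right h2.le han.le
      apply ne_of_lt
      nlinarith
    · subst h2
      have : (-2 : ℝ) * (-2 + 2) = 0 := by norm_num
      rw [show ((-2 : ℝ) * (-2 + 2)) = 0 by norm_num, zero_pow hpos.ne']
      norm_num
    · -- -2 < r < 0
      by_cases hm1 : r = -1
      · subst hm1
        rw [show ((1 : ℝ) + -1) ^ 2 = 0 by norm_num, zero_pow hpos.ne',
          show ((-1 : ℝ) * (-1 + 2)) = -1 by norm_num, hodd.neg_one_pow]
        norm_num
      · have ha : 0 < (1 + r) ^ 2 := by
          have : (1 : ℝ) + r ≠ 0 := fun h => hm1 (by linarith)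
          positivity
        have hb : r * (r + 2) < 0 := by nlinarith
        have h1 : r * ((1 + r) ^ 2) ^ n < 0 :=
          mul_neg_of_neg_of_pos hneg (pow_pos ha n)
        have h2' : (r * (r + 2)) ^ n < 0 := hodd.pow_neg hb
        exact ne_of_lt (by linarith)
  · exact absurd h0 hr
  · have h1 : 0 < r * ((1 + r) ^ 2) ^ n :=
      mul_pos hposr (pow_pos (by positivity) n)
    have h2 : 0 < (r * (r + 2)) ^ n := pow_pos (by nlinarith) n
    exact ne_of_gt (by linarith)

/-- For every odd positive integer `n`, no nonzero real number is a domination root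
of the friendship graph `F_n`. -/
theorem no_nonzero_real_domination_root_friendship (n : ℕ) (hpos : 0 < n) (hodd : Odd n)
    (r : ℝ) (hr : r ≠ 0) :
    (domPoly (friendshipGraph n)).eval (r : ℂ) ≠ 0 := by
  have heval : (domPoly (friendshipGraph n)).eval (r : ℂ)
      = ((r * (1 + r) ^ (2 * n) + ((1 + r) ^ 2 - 1) ^ n : ℝ) : ℂ) := by
    rw [domPoly_friendship n hpos]
    push_cast
    simp
  rw [heval]
  exact_mod_cast key_real_ne n hpos hodd r hr
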